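/- Let G be a graph without a 2-factor and let (S,T) be a minimum barrier. Then for every component C of G−(S∪T) with e_G(C,T) even, there are no edges between T and C, i.e., e_G(T, V(C)) = 0. -/

import Mathlib

open SimpleGraph

namespace VizingTwoFactor

variable {V : Type*}

/-- The degree of a vertex, as the `ncard` of its neighbor set. -/
noncomputable def ndeg (G : SimpleGraph V) (v : V) : ℕ :=
  (G.neighborSet v).ncard

/-- `G` is bipartite with parts `X` and `T`. -/
def IsBipartiteWith (G : SimpleGraph V) (X T : Set V) : Prop :=
  Disjoint X T ∧ ∀ u v : V, G.Adj u v → (u ∈ X ∧ v ∈ T) ∨ (u ∈ T ∧ v ∈ X)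

/-- The set of neighbors of a set of vertices. -/
def NSet (G : SimpleGraph V) (A : Set V) : Set V :=
  {v | ∃ a ∈ A, G.Adj a v}

/-- `G` has a matching saturating the vertex set `T`. -/
def HasMatchingSaturating (G : SimpleGraph V) (T : Set V) : Prop :=
  ∃ M : G.Subgraph, M.IsMatching ∧ T ⊆ M.verts

/-- Number of (ordered) adjacent pairs with first coordinate in `A` and second in `B`;
for disjoint `A`, `B` this is the number of edges between `A` and `B`. -/
noncomputable def eBetween (G : SimpleGraph V) (A B : Set V) : ℕ :=
  {p : V × V | p.1 ∈ A ∧ p.2 ∈ B ∧ G.Adj p.1 p.2}.ncard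

/-- Number of neighbors of `v` inside `A`. -/
noncomputable def degIn (G : SimpleGraph V) (A : Set V) (v : V) : ℕ :=
  (G.neighborSet v ∩ A).ncard

/-- The vertex set (in `V`) of a connected component of an induced subgraph. -/
def csupp (G : SimpleGraph V) (U : Set V) (C : (G.induce U).ConnectedComponent) : Set V :=
  Subtype.val '' C.supp

/-- The odd components of `G − (S ∪ T)` w.r.t. `(S,T)`: components sending an odd
number of edges to `T`. -/
noncomputable def oddComps (G : SimpleGraph V) (S T : Set V) :
    Set ((G.induce (S ∪ T)ᶜ).ConnectedComponent) :=
  {C | Odd (eBetween G (csupp G (S ∪ T)ᶜ C) T)}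

/-- `h_G(S,T)`: the number of odd components. -/
noncomputable def hNum (G : SimpleGraph V) (S T : Set V) : ℕ :=
  (oddComps G S T).ncard

/-- `δ_G(S,T) = 2|S| + Σ_{v∈T} deg_{G−S}(v) − 2|T| − h_G(S,T)`. -/
noncomputable def deltaST (G : SimpleGraph V) (S T : Set V) : ℤ :=
  2 * S.ncard + (∑ᶠ v ∈ T, (degIn G Sᶜ v : ℤ)) - 2 * T.ncard - hNum G S T

/-- A barrier. -/
def IsBarrier (G : SimpleGraph V) (S T : Set V) : Prop :=
  Disjoint S T ∧ deltaST G S T ≤ -2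

/-- A minimum barrier: minimizes `|S ∪ T|` among barriers. -/
def IsMinBarrier (G : SimpleGraph V) (S T : Set V) : Prop :=
  IsBarrier G S T ∧ ∀ S' T' : Set V, IsBarrier G S' T' → (S ∪ T).ncard ≤ (S' ∪ T').ncard

/-- `G` has a 2-factor: a spanning subgraph in which every vertex has degree 2. -/
def HasTwoFactor (G : SimpleGraph V) : Prop :=
  ∃ H : SimpleGraph V, H ≤ G ∧ ∀ v : V, ndeg H v = 2

/-- `G` has a proper edge coloring with `k` colors. -/
def HasEdgeColoring (G : SimpleGraph V) (k : ℕ) : Prop :=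
  ∃ f : G.edgeSet → Fin k, ∀ e₁ e₂ : G.edgeSet, e₁ ≠ e₂ →
    (∃ v : V, v ∈ (e₁ : Sym2 V) ∧ v ∈ (e₂ : Sym2 V)) → f e₁ ≠ f e₂

/-- The chromatic index `χ'(G)`. -/
noncomputable def chromIdx (G : SimpleGraph V) : ℕ :=
  sInf {k | HasEdgeColoring G k}

/-- `Δ` is the maximum degree of `G`. -/
def IsMaxDegree (G : SimpleGraph V) (Δ : ℕ) : Prop :=
  (∀ v : V, ndeg G v ≤ Δ) ∧ ∃ v : V, ndeg G v = Δ

/-- `G` is `Δ`-critical: no isolated vertices, maximum degree `Δ`, `χ'(G) = Δ + 1`, and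
`χ'(G − e) = Δ` for every edge `e`. -/
def IsDeltaCritical (G : SimpleGraph V) (Δ : ℕ) : Prop :=
  (∀ v : V, ∃ u : V, G.Adj v u) ∧ IsMaxDegree G Δ ∧ chromIdx G = Δ + 1 ∧
    ∀ e ∈ G.edgeSet, chromIdx (G.deleteEdges {e}) = Δ

/-- `T` is an independent set in `G`. -/
def IsIndep (G : SimpleGraph V) (T : Set V) : Prop :=
  ∀ u ∈ T, ∀ v ∈ T, ¬ G.Adj u v

/-- The bipartite graph `H*` consisting of the edges of `G` between `V(G) \ T` and `T`. -/
def betweenGraph (G : SimpleGraph V) (T : Set V) : SimpleGraph V where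
  Adj u v := G.Adj u v ∧ ((u ∉ T ∧ v ∈ T) ∨ (u ∈ T ∧ v ∉ T))
  symm := ⟨fun u v h => ⟨h.1.symm, h.2.elim (fun h' => Or.inr ⟨h'.2, h'.1⟩)
    (fun h' => Or.inl ⟨h'.2, h'.1⟩)⟩⟩
  loopless := ⟨fun u h => G.loopless.irrefl u h.1⟩

/-!
If an even component `C` of `G - (S ∪ T)` had an edge to some `t ∈ T`, then `(S, T - t)` would be
a barrier with fewer vertices. Removing `t` from `T` lowers `Σ_{v∈T} deg_{G-S}(v) - 2|T|` by
`deg_{G-S}(t) - 2`. In `G - (S ∪ (T - t))` the components adjacent to `t` merge with `t` into one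
component and all others are unchanged, so at most the `k` odd components adjacent to `t` are lost.
As `C` is even, `t` has at least `k + 1` neighbours outside `S ∪ T`, and a parity count supplies
the missing unit, so `δ` does not increase.
-/

section EdgeCount

variable (G : SimpleGraph V)

lemma eBetween_comm (A B : Set V) : eBetween G A B = eBetween G B A := by
  have : {p : V × V | p.1 ∈ A ∧ p.2 ∈ B ∧ G.Adj p.1 p.2} =
      Prod.swap '' {p : V × V | p.1 ∈ B ∧ p.2 ∈ A ∧ G.Adj p.1 p.2} := by
    ext ⟨a, b⟩
    simp only [Set.mem_ofPred_eq, Set.image_swap_eq_preimage_swap, Set.mem_preimage,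
      Prod.fst_swap, Prod.snd_swap, G.adj_comm b a]
    tauto
  rw [eBetween, eBetween, this, Set.ncard_image_of_injective _ Prod.swap_injective]

lemma degIn_eq_eBetween (B : Set V) (t : V) : degIn G B t = eBetween G {t} B := by
  have : {p : V × V | p.1 ∈ ({t} : Set V) ∧ p.2 ∈ B ∧ G.Adj p.1 p.2} =
      Prod.mk t '' (G.neighborSet t ∩ B) := by
    ext ⟨a, b⟩
    simp only [Set.mem_ofPred_eq, Set.mem_singleton_iff, Set.mem_image, Set.mem_inter_iff,
      mem_neighborSet, Prod.mk.injEq]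
    constructor
    · rintro ⟨rfl, hb, hadj⟩
      exact ⟨b, ⟨hadj, hb⟩, rfl, rfl⟩
    · rintro ⟨b, ⟨hadj, hb⟩, rfl, rfl⟩
      exact ⟨rfl, hb, hadj⟩
  rw [degIn, eBetween, this, Set.ncard_image_of_injective _ (Prod.mk_right_injective t)]

variable [Finite V]

lemma eBetween_eq_zero_iff {A B : Set V} :
    eBetween G A B = 0 ↔ ∀ a ∈ A, ∀ b ∈ B, ¬ G.Adj a b := by
  rw [eBetween, Set.ncard_eq_zero]
  simp only [Set.eq_empty_iff_forall_notMem, Set.mem_ofPred_eq, not_and, Prod.forall]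
  exact ⟨fun h a ha b hb => h a b ha hb, fun h a b ha hb => h a ha b hb⟩

lemma eBetween_union_left {A₁ A₂ : Set V} (h : Disjoint A₁ A₂) (B : Set V) :
    eBetween G (A₁ ∪ A₂) B = eBetween G A₁ B + eBetween G A₂ B := by
  have : {p : V × V | p.1 ∈ A₁ ∪ A₂ ∧ p.2 ∈ B ∧ G.Adj p.1 p.2} =
      {p : V × V | p.1 ∈ A₁ ∧ p.2 ∈ B ∧ G.Adj p.1 p.2} ∪
      {p : V × V | p.1 ∈ A₂ ∧ p.2 ∈ B ∧ G.Adj p.1 p.2} := by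
    ext p
    simp only [Set.mem_ofPred_eq, Set.mem_union]
    tauto
  rw [eBetween, this, Set.ncard_union_eq]
  · rfl
  · exact Set.disjoint_left.mpr fun p hp₁ hp₂ => Set.disjoint_left.mp h hp₁.1 hp₂.1

lemma eBetween_union_right (A : Set V) {B₁ B₂ : Set V} (h : Disjoint B₁ B₂) :
    eBetween G A (B₁ ∪ B₂) = eBetween G A B₁ + eBetween G A B₂ := by
  rw [eBetween_comm, eBetween_union_left G h, eBetween_comm G B₁, eBetween_comm G B₂]

lemma eBetween_biUnion_left {ι : Type*} (s : Finset ι) {A : ι → Set V}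
    (h : (s : Set ι).PairwiseDisjoint A) (B : Set V) :
    eBetween G (⋃ i ∈ s, A i) B = ∑ i ∈ s, eBetween G (A i) B := by
  classical
  induction s using Finset.induction_on with
  | empty => simp [eBetween_eq_zero_iff]
  | insert i s hi ih =>
    rw [Finset.coe_insert, Set.pairwiseDisjoint_insert_of_notMem (by exact_mod_cast hi)] at h
    rw [Finset.set_biUnion_insert, Finset.sum_insert hi,
      eBetween_union_left G (Set.disjoint_iUnion₂_right.mpr fun j (hj : j ∈ s) => h.2 j hj), ih h.1]

end EdgeCount

/-- For the components `i ∈ A` adjacent to a vertex `t`: `m i` counts their edges to `t`, `p i`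
their edges to `T`, and `q` counts the edges from `t` to `T`. -/
lemma card_filter_odd_add_two_le {ι : Type*} (A : Finset ι) (m p : ι → ℕ) (q : ℕ)
    (hm : ∀ i ∈ A, 1 ≤ m i) (heven : ∃ i ∈ A, Even (m i + p i)) :
    (A.filter fun i => Odd (m i + p i)).card + 2 ≤ (q + ∑ i ∈ A, p i) % 2 + q + ∑ i ∈ A, m i := by
  obtain ⟨i₀, hi₀, hi₀even⟩ := heven
  have hcard : (A.filter fun i => Odd (m i + p i)).card + 1 ≤ A.card := by
    refine Finset.card_lt_card (Finset.filter_ssubset.mpr ⟨i₀, hi₀, ?_⟩)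
    exact Nat.not_odd_iff_even.mpr hi₀even
  have hsum : A.card ≤ ∑ i ∈ A, m i := by
    simpa using Finset.card_nsmul_le_sum A m 1 hm
  have hparity := (Finset.even_sum_iff_even_card_odd (s := A) fun i => m i + p i)
  rw [Finset.sum_add_distrib, Nat.even_iff, Nat.even_iff] at hparity
  omega

lemma _root_.SimpleGraph.Reachable.mem_of_adj_closed {α : Type*} {H : SimpleGraph α} {W : Set α}
    (hW : ∀ x ∈ W, ∀ y, H.Adj x y → y ∈ W) {u v : α} (huv : H.Reachable u v) (hu : u ∈ W) :
    v ∈ W :=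
  huv.mem_subgraphVerts (H := (⊤ : H.Subgraph).induce W)
    (fun x hx y hxy => ⟨hx, hW x hx y hxy, hxy⟩) hu

section Components

variable (G : SimpleGraph V) {U : Set V}

lemma mem_csupp {C : (G.induce U).ConnectedComponent} {x : V} :
    x ∈ csupp G U C ↔ ∃ hx : x ∈ U, (G.induce U).connectedComponentMk ⟨x, hx⟩ = C := by
  simp [csupp, ConnectedComponent.mem_supp_iff]

lemma mem_csupp_connectedComponentMk {x : V} (hx : x ∈ U) :
    x ∈ csupp G U ((G.induce U).connectedComponentMk ⟨x, hx⟩) :=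
  (mem_csupp G).mpr ⟨hx, rfl⟩

lemma csupp_subset (C : (G.induce U).ConnectedComponent) : csupp G U C ⊆ U :=
  Subtype.coe_image_subset U _

lemma csupp_nonempty (C : (G.induce U).ConnectedComponent) : (csupp G U C).Nonempty := by
  induction C using ConnectedComponent.ind with
  | h x => exact ⟨x, mem_csupp_connectedComponentMk G x.2⟩

lemma eq_of_mem_csupp {C₁ C₂ : (G.induce U).ConnectedComponent} {x : V}
    (h₁ : x ∈ csupp G U C₁) (h₂ : x ∈ csupp G U C₂) : C₁ = C₂ := by
  obtain ⟨_, rfl⟩ := (mem_csupp G).mp h₁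
  obtain ⟨_, rfl⟩ := (mem_csupp G).mp h₂
  rfl

lemma pairwiseDisjoint_csupp (s : Set (G.induce U).ConnectedComponent) :
    s.PairwiseDisjoint (csupp G U) :=
  fun _ _ _ _ hne => Set.disjoint_left.mpr fun _ h₁ h₂ => hne (eq_of_mem_csupp G h₁ h₂)

def AdjComp (t : V) (C : (G.induce U).ConnectedComponent) : Prop :=
  ∃ z ∈ csupp G U C, G.Adj t z

def liftComp (t : V) (C : (G.induce U).ConnectedComponent) :
    (G.induce (insert t U)).ConnectedComponent :=
  C.map (G.induceHomOfLE (Set.subset_insert t U)).toHom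

def compOfInsert (U : Set V) (t : V) : (G.induce (insert t U)).ConnectedComponent :=
  (G.induce (insert t U)).connectedComponentMk ⟨t, Set.mem_insert t U⟩

variable {t : V}

lemma liftComp_connectedComponentMk {x : V} (hx : x ∈ U) :
    liftComp G t ((G.induce U).connectedComponentMk ⟨x, hx⟩) =
      (G.induce (insert t U)).connectedComponentMk ⟨x, Set.mem_insert_of_mem t hx⟩ :=
  rfl

lemma csupp_subset_csupp_liftComp (C : (G.induce U).ConnectedComponent) :
    csupp G U C ⊆ csupp G (insert t U) (liftComp G t C) := by
  intro x hx
  obtain ⟨hxU, rfl⟩ := (mem_csupp G).mp hx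
  exact mem_csupp_connectedComponentMk G (Set.mem_insert_of_mem t hxU)

lemma liftComp_eq_compOfInsert {C : (G.induce U).ConnectedComponent} (h : AdjComp G t C) :
    liftComp G t C = compOfInsert G U t := by
  obtain ⟨z, hz, htz⟩ := h
  obtain ⟨hzU, rfl⟩ := (mem_csupp G).mp hz
  rw [liftComp_connectedComponentMk G hzU]
  exact ConnectedComponent.sound (Adj.reachable (by simpa using htz.symm))

/-- A component not adjacent to `t` is closed under adjacency in `G[U ∪ {t}]`. -/
lemma csupp_liftComp_of_not_adjComp {C : (G.induce U).ConnectedComponent}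
    (h : ¬ AdjComp G t C) : csupp G (insert t U) (liftComp G t C) = csupp G U C := by
  refine (Set.Subset.antisymm ?_ (csupp_subset_csupp_liftComp G C))
  obtain ⟨c, hc⟩ := csupp_nonempty G C
  obtain ⟨hcU, rfl⟩ := (mem_csupp G).mp hc
  intro x hx
  obtain ⟨hx, hxC⟩ := (mem_csupp G).mp hx
  have hreach := ConnectedComponent.exact (hxC.trans (liftComp_connectedComponentMk G hcU)).symm
  refine hreach.mem_of_adj_closed (W := {y : ↥(insert t U) | (y : V) ∈ csupp G U _}) ?_ hc
  rintro ⟨y, _⟩ hy ⟨z, hz⟩ hyz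
  have hzt : z ≠ t := by
    rintro rfl
    exact h ⟨y, hy, (by simpa using hyz.symm)⟩
  obtain ⟨hyU, hyC⟩ := (mem_csupp G).mp hy
  refine (mem_csupp G).mpr ⟨(Set.mem_insert_iff.mp hz).resolve_left hzt, ?_⟩
  rw [← hyC]
  exact ConnectedComponent.sound (Adj.reachable (by simpa using hyz.symm))

lemma eq_of_liftComp_eq {C₁ C₂ : (G.induce U).ConnectedComponent} (h₁ : ¬ AdjComp G t C₁)
    (heq : liftComp G t C₁ = liftComp G t C₂) : C₁ = C₂ := by
  obtain ⟨x, hx⟩ := csupp_nonempty G C₂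
  have hx₁ : x ∈ csupp G U C₁ := by
    rw [← csupp_liftComp_of_not_adjComp G h₁, heq]
    exact csupp_subset_csupp_liftComp G C₂ hx
  exact eq_of_mem_csupp G hx₁ hx

lemma liftComp_ne_compOfInsert (htU : t ∉ U) {C : (G.induce U).ConnectedComponent}
    (h : ¬ AdjComp G t C) : liftComp G t C ≠ compOfInsert G U t := by
  intro heq
  have ht : t ∈ csupp G (insert t U) (liftComp G t C) :=
    heq ▸ mem_csupp_connectedComponentMk G (Set.mem_insert t U)
  rw [csupp_liftComp_of_not_adjComp G h] at ht
  exact htU (csupp_subset G C ht)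

lemma csupp_compOfInsert :
    csupp G (insert t U) (compOfInsert G U t) =
      insert t (⋃ (C : (G.induce U).ConnectedComponent) (_ : AdjComp G t C), csupp G U C) := by
  refine Set.Subset.antisymm ?_ (Set.insert_subset ?_ ?_)
  · intro x hx
    obtain ⟨hx, hxD⟩ := (mem_csupp G).mp hx
    refine (ConnectedComponent.exact hxD).symm.mem_of_adj_closed
      (W := {y : ↥(insert t U) | (y : V) ∈ insert t (⋃ (C) (_ : AdjComp G t C), csupp G U C)}) ?_
      (Set.mem_insert t _)
    rintro ⟨y, _⟩ hy ⟨z, hz⟩ hyz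
    rw [induce_adj] at hyz
    rcases eq_or_ne z t with rfl | hzt
    · exact Set.mem_insert _ _
    have hzU := (Set.mem_insert_iff.mp hz).resolve_left hzt
    refine Set.mem_insert_of_mem _ (Set.mem_biUnion ?_ (mem_csupp_connectedComponentMk G hzU))
    rcases hy with hyt | hy
    · exact ⟨z, mem_csupp_connectedComponentMk G hzU, hyt ▸ hyz⟩
    obtain ⟨C, hC, hyC⟩ := Set.mem_iUnion₂.mp hy
    obtain ⟨hyU, rfl⟩ := (mem_csupp G).mp hyC
    have hzy : (G.induce U).connectedComponentMk ⟨z, hzU⟩ =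
        (G.induce U).connectedComponentMk ⟨y, hyU⟩ :=
      ConnectedComponent.sound (Adj.reachable (by simpa using hyz.symm))
    rwa [hzy]
  · exact mem_csupp_connectedComponentMk G (Set.mem_insert t U)
  · refine Set.iUnion₂_subset fun C hC => ?_
    rw [← liftComp_eq_compOfInsert G hC]
    exact csupp_subset_csupp_liftComp G C

end Components

def oddCompsIn (G : SimpleGraph V) (U T : Set V) : Set (G.induce U).ConnectedComponent :=
  {C | Odd (eBetween G (csupp G U C) T)}

section Counting

variable (G : SimpleGraph V) [Finite V] {U : Set V} {t : V}

lemma eBetween_singleton_eq_sum (A : Finset (G.induce U).ConnectedComponent)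
    (hA : ∀ C, C ∈ A ↔ AdjComp G t C) :
    eBetween G {t} U = ∑ C ∈ A, eBetween G (csupp G U C) {t} := by
  have hsub : (⋃ C ∈ A, csupp G U C) ⊆ U := Set.iUnion₂_subset fun C _ => csupp_subset G C
  have hrest : eBetween G (U \ ⋃ C ∈ A, csupp G U C) {t} = 0 := by
    refine (eBetween_eq_zero_iff G).mpr fun a ha b hb hab => ha.2 ?_
    rw [Set.mem_singleton_iff.mp hb] at hab
    refine Set.mem_biUnion ((hA _).mpr ?_) (mem_csupp_connectedComponentMk G ha.1)
    exact ⟨a, mem_csupp_connectedComponentMk G ha.1, hab.symm⟩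
  calc eBetween G {t} U
      = eBetween G ((⋃ C ∈ A, csupp G U C) ∪ (U \ ⋃ C ∈ A, csupp G U C)) {t} := by
        rw [Set.union_sdiff_cancel hsub, eBetween_comm]
    _ = ∑ C ∈ A, eBetween G (csupp G U C) {t} := by
        rw [eBetween_union_left G Set.disjoint_sdiff_right, hrest, add_zero,
          eBetween_biUnion_left G A (pairwiseDisjoint_csupp G _)]

lemma eBetween_csupp_compOfInsert (A : Finset (G.induce U).ConnectedComponent)
    (hA : ∀ C, C ∈ A ↔ AdjComp G t C) (htU : t ∉ U) (B : Set V) :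
    eBetween G (csupp G (insert t U) (compOfInsert G U t)) B =
      eBetween G {t} B + ∑ C ∈ A, eBetween G (csupp G U C) B := by
  have hA' : (⋃ (C) (_ : AdjComp G t C), csupp G U C) = ⋃ C ∈ A, csupp G U C := by
    simp only [hA]
  have ht : t ∉ ⋃ C ∈ A, csupp G U C := fun ht =>
    htU (Set.iUnion₂_subset (fun C _ => csupp_subset G C) ht)
  rw [csupp_compOfInsert, hA', Set.insert_eq,
    eBetween_union_left G (Set.disjoint_singleton_left.mpr ht),
    eBetween_biUnion_left G A (pairwiseDisjoint_csupp G _)]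

/-- Components not adjacent to `t` survive in `G[U ∪ {t}]`, alongside the component of `t`. -/
lemma le_ncard_oddCompsIn_insert (htU : t ∉ U) (B : Set V) :
    {C : (G.induce U).ConnectedComponent |
        ¬ AdjComp G t C ∧ Odd (eBetween G (csupp G U C) B)}.ncard +
      eBetween G (csupp G (insert t U) (compOfInsert G U t)) B % 2 ≤
      (oddCompsIn G (insert t U) B).ncard := by
  set X := {C : (G.induce U).ConnectedComponent |
    ¬ AdjComp G t C ∧ Odd (eBetween G (csupp G U C) B)}
  have hmaps : liftComp G t '' X ⊆ oddCompsIn G (insert t U) B \ {compOfInsert G U t} := by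
    rintro _ ⟨C, ⟨hC, hodd⟩, rfl⟩
    refine ⟨?_, liftComp_ne_compOfInsert G htU hC⟩
    rwa [oddCompsIn, Set.mem_ofPred_eq, csupp_liftComp_of_not_adjComp G hC]
  have hX : (liftComp G t '' X).ncard = X.ncard :=
    Set.InjOn.ncard_image fun C₁ h₁ _ _ => eq_of_liftComp_eq G h₁.1
  have hle := Set.ncard_le_ncard hmaps
  rcases Nat.even_or_odd (eBetween G (csupp G (insert t U) (compOfInsert G U t)) B) with he | ho
  · have := Set.ncard_le_ncard (Set.sdiff_subset (s := oddCompsIn G (insert t U) B)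
      (t := {compOfInsert G U t}))
    rw [Nat.even_iff.mp he]
    omega
  · have := Set.ncard_sdiff_singleton_add_one (show compOfInsert G U t ∈ oddCompsIn G _ B from ho)
    rw [Nat.odd_iff.mp ho]
    omega

lemma ncard_oddCompsIn_add_two_le {T : Set V} (htU : t ∉ U) (htT : t ∉ T)
    (hC₀ : ∃ C₀, AdjComp G t C₀ ∧ Even (eBetween G (csupp G U C₀) (insert t T))) :
    (oddCompsIn G U (insert t T)).ncard + 2 ≤
      (oddCompsIn G (insert t U) T).ncard + eBetween G {t} T + eBetween G {t} U := by
  classical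
  set A := (Set.toFinite {C : (G.induce U).ConnectedComponent | AdjComp G t C}).toFinset
  have hA : ∀ C, C ∈ A ↔ AdjComp G t C := fun C => Set.Finite.mem_toFinset _
  set m := fun C => eBetween G (csupp G U C) {t}
  set p := fun C => eBetween G (csupp G U C) T
  have hsplit : ∀ C, eBetween G (csupp G U C) (insert t T) = m C + p C := fun C => by
    rw [Set.insert_eq, eBetween_union_right G _ (Set.disjoint_singleton_left.mpr htT)]
  have hm : ∀ C ∈ A, 1 ≤ m C := fun C hC => by
    obtain ⟨z, hz, htz⟩ := (hA C).mp hC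
    exact Nat.one_le_iff_ne_zero.mpr fun h => (eBetween_eq_zero_iff G).mp h z hz t rfl htz.symm
  have hm₀ : ∀ C, ¬ AdjComp G t C → m C = 0 := fun C hC =>
    (eBetween_eq_zero_iff G).mpr fun z hz _ hb hzt => hC ⟨z, hz, hb ▸ hzt.symm⟩
  have hodd : oddCompsIn G U (insert t T) =
      {C | ¬ AdjComp G t C ∧ Odd (p C)} ∪ ↑(A.filter fun C => Odd (m C + p C)) := by
    ext C
    by_cases hC : AdjComp G t C
    · simp [oddCompsIn, hsplit, hA, hC]
    · simp [oddCompsIn, hsplit, hA, hC, hm₀ C hC]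
  have hdisj : Disjoint {C | ¬ AdjComp G t C ∧ Odd (p C)}
      (↑(A.filter fun C => Odd (m C + p C)) : Set _) :=
    Set.disjoint_left.mpr fun C hC hC' => hC.1 ((hA C).mp (Finset.mem_filter.mp hC').1)
  have hlow := le_ncard_oddCompsIn_insert G htU T
  rw [eBetween_csupp_compOfInsert G A hA htU] at hlow
  have key := card_filter_odd_add_two_le A m p (eBetween G {t} T) hm
    (by simpa only [← hsplit, hA] using hC₀)
  rw [hodd, Set.ncard_union_eq hdisj, Set.ncard_coe_finset, eBetween_singleton_eq_sum G A hA]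
  simp only [m, p] at key ⊢
  omega

end Counting

lemma deltaST_le_deltaST_insert (G : SimpleGraph V) [Finite V] {S T : Set V} {t : V}
    (hST : Disjoint S T) (htS : t ∉ S) (htT : t ∉ T)
    (hC : ∃ C : (G.induce (S ∪ insert t T)ᶜ).ConnectedComponent, AdjComp G t C ∧
      Even (eBetween G (csupp G (S ∪ insert t T)ᶜ C) (insert t T))) :
    deltaST G S T ≤ deltaST G S (insert t T) := by
  set U := (S ∪ insert t T)ᶜ
  have htU : t ∉ U := by simp [U]
  have hU : (S ∪ T)ᶜ = insert t U := by
    ext x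
    rcases eq_or_ne x t with rfl | hxt <;> simp [U, *]
  have hSc : Sᶜ = {t} ∪ (T ∪ U) := by
    ext x
    have hxST : x ∈ S → x ∉ T := fun h => Set.disjoint_left.mp hST h
    have hxt : x = t → x ∉ S := fun h => h ▸ htS
    simp only [U, Set.mem_compl_iff, Set.mem_union, Set.mem_insert_iff, Set.mem_singleton_iff]
    tauto
  have hdeg : degIn G Sᶜ t = eBetween G {t} T + eBetween G {t} U := by
    have hloop : eBetween G {t} {t} = 0 := (eBetween_eq_zero_iff G).mpr (by simp)
    have hTU : Disjoint T U :=
      Set.disjoint_compl_right_iff_subset.mpr fun x hx => Or.inr (Set.mem_insert_of_mem t hx)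
    rw [degIn_eq_eBetween, hSc,
      eBetween_union_right G _ (Set.disjoint_singleton_left.mpr (by simp [htT, htU])),
      eBetween_union_right G _ hTU, hloop, zero_add]
  have hcount := ncard_oddCompsIn_add_two_le G htU htT hC
  have hNumT : hNum G S T = (oddCompsIn G (insert t U) T).ncard := by
    rw [hNum, ← hU]
    rfl
  have hNumInsert : hNum G S (insert t T) = (oddCompsIn G U (insert t T)).ncard := rfl
  have hsum : ∑ᶠ v ∈ insert t T, (degIn G Sᶜ v : ℤ) =
      degIn G Sᶜ t + ∑ᶠ v ∈ T, (degIn G Sᶜ v : ℤ) :=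
    finsum_mem_insert _ htT (Set.toFinite T)
  rw [deltaST, deltaST, hsum, Set.ncard_insert_of_notMem htT, hNumT, hNumInsert, hdeg]
  push_cast
  omega

theorem vizing_stmt_8_general [Fintype V] (G : SimpleGraph V) (S T : Set V)
    (hmin : IsMinBarrier G S T) :
    ∀ C : (G.induce (S ∪ T)ᶜ).ConnectedComponent,
      Even (eBetween G (csupp G (S ∪ T)ᶜ C) T) →
      eBetween G (csupp G (S ∪ T)ᶜ C) T = 0 := by
  obtain ⟨⟨hST, hδ⟩, hminimal⟩ := hmin
  intro C heven
  by_contra hne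
  obtain ⟨c, hc, t, htT, hct⟩ : ∃ c ∈ csupp G (S ∪ T)ᶜ C, ∃ t ∈ T, G.Adj c t := by
    simpa [eBetween_eq_zero_iff] using hne
  have hT : insert t (T \ {t}) = T := Set.insert_sdiff_self_of_mem htT
  have htS : t ∉ S := Set.disjoint_right.mp hST htT
  have hST' : Disjoint S (T \ {t}) := hST.mono_right Set.sdiff_subset
  have hC : ∃ C' : (G.induce (S ∪ insert t (T \ {t}))ᶜ).ConnectedComponent, AdjComp G t C' ∧
      Even (eBetween G (csupp G _ C') (insert t (T \ {t}))) := by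
    rw [hT]
    exact ⟨C, ⟨c, hc, hct.symm⟩, heven⟩
  have hle := deltaST_le_deltaST_insert G hST' htS (by simp) hC
  rw [hT] at hle
  have hsub : S ∪ T \ {t} ⊆ S ∪ T := Set.union_subset_union_right S Set.sdiff_subset
  have hsmaller : (S ∪ T \ {t}).ncard < (S ∪ T).ncard :=
    Set.ncard_lt_ncard ((Set.ssubset_iff_of_subset hsub).mpr
      ⟨t, Set.mem_union_right S htT, by simp [htS]⟩)
  have := hminimal S (T \ {t}) ⟨hST', hle.trans hδ⟩
  omega

theorem vizing_stmt_8 [Fintype V] (G : SimpleGraph V) (S T : Set V)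
    (hG : ¬ HasTwoFactor G) (hmin : IsMinBarrier G S T) :
    ∀ C : (G.induce (S ∪ T)ᶜ).ConnectedComponent,
      Even (eBetween G (csupp G (S ∪ T)ᶜ C) T) →
      eBetween G (csupp G (S ∪ T)ᶜ C) T = 0 :=
  vizing_stmt_8_general G S T hmin

end VizingTwoFactor
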